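/- arXiv:2112.13754 — 5 statements merged into one kernel-verified Lean document; each statement's English description precedes it below -/
import Mathlib

section
/- Let A₁,…,Aₙ, B ∈ ℝ², set A_{n+1} := A₁, and suppose det(Aᵢ − B, A_{i+1} − B) > 0 for all i = 1,…,n. Then B lies in the interior of the convex hull of {A₁,…,Aₙ}. -/
/-- Determinant of the 2×2 matrix with columns `u` and `v`. -/
def det2 (u v : ℝ × ℝ) : ℝ := u.1 * v.2 - u.2 * v.1

/-!
If `B` lay outside the convex hull, a linear form `f` would separate it, so all the vectors
`uᵢ = Aᵢ − B` would lie in the open half-plane `f < 0`. There the slope `f(J uᵢ) / f(uᵢ)`,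
with `J` the rotation by a right angle, is strictly monotone along any positively oriented
pair `uᵢ, uᵢ₊₁`, which is impossible for a cyclic sequence. The set of points `x` for which
all the determinants `det(Aᵢ − x, Aᵢ₊₁ − x)` are positive is open, so it lies in the interior
of the hull.
-/

theorem ZMod.not_forall_lt_apply_add_one {n : ℕ} [NeZero n] {α : Type*} [Preorder α]
    (s : ZMod n → α) : ¬ ∀ i, s i < s (i + 1) := by
  intro h
  have hmono : StrictMono fun k : ℕ => s k :=
    strictMono_nat_of_lt_succ fun k => by simpa using h k
  have := hmono (Nat.pos_of_neZero n)
  simp at this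

theorem LinearMap.apply_eq_fst_mul_add_snd_mul (f : ℝ × ℝ →ₗ[ℝ] ℝ) (u : ℝ × ℝ) :
    f u = u.1 * f (1, 0) + u.2 * f (0, 1) := by
  conv_lhs => rw [show u = u.1 • ((1 : ℝ), (0 : ℝ)) + u.2 • ((0 : ℝ), (1 : ℝ)) by ext <;> simp]
  simp only [map_add, map_smul, smul_eq_mul]

theorem LinearMap.sq_add_sq_mul_det2 (f : ℝ × ℝ →ₗ[ℝ] ℝ) (u v : ℝ × ℝ) :
    (f (1, 0) ^ 2 + f (0, 1) ^ 2) * det2 u v = f (-u.2, u.1) * f v - f u * f (-v.2, v.1) := by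
  rw [f.apply_eq_fst_mul_add_snd_mul u, f.apply_eq_fst_mul_add_snd_mul v,
    f.apply_eq_fst_mul_add_snd_mul (-u.2, u.1), f.apply_eq_fst_mul_add_snd_mul (-v.2, v.1), det2]
  ring

theorem not_forall_det2_pos_of_forall_map_neg {n : ℕ} [NeZero n] (u : ZMod n → ℝ × ℝ)
    (f : ℝ × ℝ →ₗ[ℝ] ℝ) (hf : ∀ i, f (u i) < 0) : ¬ ∀ i, 0 < det2 (u i) (u (i + 1)) := by
  intro hdet
  have hK : 0 < f (1, 0) ^ 2 + f (0, 1) ^ 2 := by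
    by_contra! hK
    have h0 := hf 0
    rw [f.apply_eq_fst_mul_add_snd_mul, show f (1, 0) = 0 by nlinarith,
      show f (0, 1) = 0 by nlinarith] at h0
    simp at h0
  refine ZMod.not_forall_lt_apply_add_one (fun i => f (-(u i).2, (u i).1) / -f (u i)) fun i => ?_
  have hlagrange := f.sq_add_sq_mul_det2 (u i) (u (i + 1))
  have hpos := mul_pos hK (hdet i)
  rw [div_lt_div_iff₀ (neg_pos.2 (hf i)) (neg_pos.2 (hf (i + 1)))]
  linarith

theorem mem_convexHull_of_forall_det2_pos {n : ℕ} [NeZero n] (A : ZMod n → ℝ × ℝ) {x : ℝ × ℝ}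
    (hdet : ∀ i, 0 < det2 (A i - x) (A (i + 1) - x)) : x ∈ convexHull ℝ (Set.range A) := by
  by_contra hx
  obtain ⟨f, c, hfA, hcx⟩ := geometric_hahn_banach_closed_point (convex_convexHull ℝ _)
    ((Set.finite_range A).isClosed_convexHull (𝕜 := ℝ)) hx
  refine not_forall_det2_pos_of_forall_map_neg (fun i => A i - x) f.toLinearMap (fun i => ?_) hdet
  have := hfA (A i) (subset_convexHull ℝ _ (Set.mem_range_self i))
  simp only [ContinuousLinearMap.coe_coe, map_sub]
  linarith

theorem isOpen_setOf_forall_det2_pos {ι : Type*} [Finite ι] (P Q : ι → ℝ × ℝ) :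
    IsOpen {x | ∀ i, 0 < det2 (P i - x) (Q i - x)} := by
  simp only [Set.ofPred_forall]
  exact isOpen_iInter_of_finite fun i => isOpen_lt continuous_const (by unfold det2; fun_prop)

/-- If all the cyclic determinants `det (A i − B, A (i+1) − B)` are positive,
then `B` lies in the interior of the convex hull of the points `A i`. -/
theorem mem_interior_of_det_pos (n : ℕ) (hn : 0 < n) (A : ZMod n → ℝ × ℝ) (B : ℝ × ℝ)
    (hdet : ∀ i : ZMod n, 0 < det2 (A i - B) (A (i + 1) - B)) :
    B ∈ interior (convexHull ℝ (Set.range A)) := by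
  have : NeZero n := ⟨hn.ne'⟩
  exact interior_maximal (fun _ => mem_convexHull_of_forall_det2_pos A)
    (isOpen_setOf_forall_det2_pos A fun i => A (i + 1)) hdet
end

section
/- If B ∈ ℝ² lies strictly on one side of a line through points A₁,…,Aₙ (i.e. there exist v, w ∈ ℝ² with w perpendicular to v such that every Aᵢ = B + tᵢ v + sᵢ w with sᵢ > 0), and A_{n+1} := A₁, then it is impossible that det(Aᵢ − B, A_{i+1} − B) > 0 for all i = 1,…,n. -/
/-- If all the points `A i` lie strictly in the open half-plane
`{B + t•v + s•w : t ∈ ℝ, s > 0}` (with `w ⊥ v`), then the cyclic determinants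
`det (A i − B, A (i+1) − B)` cannot all be positive. -/
theorem not_all_det_pos_of_halfplane (n : ℕ) (hn : 0 < n)
    (A : ZMod n → ℝ × ℝ) (B v w : ℝ × ℝ) (t s : ZMod n → ℝ)
    (hperp : v.1 * w.1 + v.2 * w.2 = 0)
    (hA : ∀ i, A i = B + t i • v + s i • w)
    (hs : ∀ i, 0 < s i) :
    ¬ (∀ i : ZMod n, 0 < det2 (A i - B) (A (i + 1) - B)) := by
  intro hpos
  haveI : NeZero n := ⟨hn.ne'⟩
  have hAB : ∀ j, A j - B = t j • v + s j • w := fun j => by rw [hA]; abel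
  set D := det2 v w with hD
  have key : ∀ i : ZMod n, 0 < (t i * s (i + 1) - s i * t (i + 1)) * D := by
    intro i
    have h := hpos i
    have expand : det2 (A i - B) (A (i + 1) - B)
        = (t i * s (i + 1) - s i * t (i + 1)) * D := by
      simp only [hAB, det2, hD, Prod.fst_add, Prod.snd_add, Prod.smul_fst,
        Prod.smul_snd, smul_eq_mul]
      ring
    rwa [expand] at h
  have key2 : ∀ i : ZMod n, 0 < (t i / s i - t (i + 1) / s (i + 1)) * D := by
    intro i
    have hsi := hs i
    have hsi' := hs (i + 1)
    have heq : (t i / s i - t (i + 1) / s (i + 1)) * D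
        = ((t i * s (i + 1) - s i * t (i + 1)) * D) / (s i * s (i + 1)) := by
      field_simp
    rw [heq]
    exact div_pos (key i) (mul_pos hsi hsi')
  have hsum0 : ∑ i : ZMod n, (t i / s i - t (i + 1) / s (i + 1)) = 0 := by
    rw [Finset.sum_sub_distrib, sub_eq_zero]
    exact (Fintype.sum_equiv (Equiv.addRight (1 : ZMod n))
      (fun i => t (i + 1) / s (i + 1)) (fun i => t i / s i) (fun i => rfl)).symm
  have htot : 0 < ∑ i : ZMod n, (t i / s i - t (i + 1) / s (i + 1)) * D :=
    Finset.sum_pos (fun i _ => key2 i) Finset.univ_nonempty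
  rw [← Finset.sum_mul, hsum0, zero_mul] at htot
  exact lt_irrefl 0 htot
end

section
/- Let P and Q be convex polygons (convex hulls of finite point sets in ℝ²) such that P is centrally symmetric about a point O_P and Q is centrally symmetric about a point O_Q. If there exists an orientation-preserving isometry σ of ℝ² with σ(P) contained in the interior of Q, then there exists an orientation-preserving isometry σ' of ℝ² with σ'(P) contained in the interior of Q and σ'(O_P) = O_Q. -/
open Real

/-- Rotation of the plane by angle `α` about the origin. -/
noncomputable def rot2 (α : ℝ) (p : ℝ × ℝ) : ℝ × ℝ :=
  (Real.cos α * p.1 - Real.sin α * p.2, Real.sin α * p.1 + Real.cos α * p.2)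

/-- Translation of the plane by the vector `(x, y)`. -/
def tr2 (x y : ℝ) (p : ℝ × ℝ) : ℝ × ℝ := (p.1 + x, p.2 + y)

/-- Central symmetry preserves the interior of a centrally symmetric set. -/
lemma interior_symm (Q : Set (ℝ × ℝ)) (OQ : ℝ × ℝ)
    (hQsym : ∀ q ∈ convexHull ℝ Q, (2 : ℝ) • OQ - q ∈ convexHull ℝ Q)
    {q : ℝ × ℝ} (hq : q ∈ interior (convexHull ℝ Q)) :
    (2 : ℝ) • OQ - q ∈ interior (convexHull ℝ Q) := by
  let e : (ℝ × ℝ) ≃ₜ (ℝ × ℝ) := (Homeomorph.neg _).trans (Homeomorph.addLeft ((2 : ℝ) • OQ))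
  have he : ∀ z, e z = (2 : ℝ) • OQ - z := by
    intro z
    simp [e, sub_eq_add_neg]
  have h1 : e '' interior (convexHull ℝ Q) = interior (e '' convexHull ℝ Q) :=
    e.image_interior _
  have h2 : e '' convexHull ℝ Q ⊆ convexHull ℝ Q := by
    rintro _ ⟨z, hz, rfl⟩
    rw [he]; exact hQsym z hz
  have : e q ∈ interior (convexHull ℝ Q) := by
    have : e q ∈ interior (e '' convexHull ℝ Q) := h1 ▸ ⟨q, hq, rfl⟩
    exact interior_mono h2 this
  rwa [he] at this

/-- If a convex polygon `P`, centrally symmetric about `O_P`, can be placed by an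
orientation-preserving isometry inside the interior of a convex polygon `Q`
that is centrally symmetric about `O_Q`, then it can be so placed with the
center `O_P` mapped exactly onto `O_Q`. -/
theorem centrally_symmetric_fit_centers (P Q : Set (ℝ × ℝ)) (hP : P.Finite) (hQ : Q.Finite)
    (OP OQ : ℝ × ℝ)
    (hPsym : ∀ p ∈ convexHull ℝ P, (2 : ℝ) • OP - p ∈ convexHull ℝ P)
    (hQsym : ∀ q ∈ convexHull ℝ Q, (2 : ℝ) • OQ - q ∈ convexHull ℝ Q)
    (hfit : ∃ x y α : ℝ, ∀ p ∈ convexHull ℝ P,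
      tr2 x y (rot2 α p) ∈ interior (convexHull ℝ Q)) :
    ∃ x y α : ℝ, (∀ p ∈ convexHull ℝ P, tr2 x y (rot2 α p) ∈ interior (convexHull ℝ Q)) ∧
      tr2 x y (rot2 α OP) = OQ := by
  obtain ⟨x, y, α, hσ⟩ := hfit
  set c : ℝ × ℝ := tr2 x y (rot2 α OP) with hc
  refine ⟨x + OQ.1 - c.1, y + OQ.2 - c.2, α, ?_, ?_⟩
  · intro p hp
    have ha : tr2 x y (rot2 α p) ∈ interior (convexHull ℝ Q) := hσ p hp
    have hp' : (2 : ℝ) • OP - p ∈ convexHull ℝ P := hPsym p hp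
    have hb' : tr2 x y (rot2 α ((2 : ℝ) • OP - p)) ∈ interior (convexHull ℝ Q) :=
      hσ _ hp'
    have hb : (2 : ℝ) • OQ - tr2 x y (rot2 α ((2 : ℝ) • OP - p))
        ∈ interior (convexHull ℝ Q) := interior_symm Q OQ hQsym hb'
    have hconv : Convex ℝ (interior (convexHull ℝ Q)) :=
      (convex_convexHull ℝ Q).interior
    have hmid := hconv ha hb (by norm_num : (0:ℝ) ≤ 1/2) (by norm_num : (0:ℝ) ≤ 1/2)
      (by norm_num : (1/2 : ℝ) + 1/2 = 1)
    have heq : (1/2 : ℝ) • tr2 x y (rot2 α p) +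
        (1/2 : ℝ) • ((2 : ℝ) • OQ - tr2 x y (rot2 α ((2 : ℝ) • OP - p))) =
        tr2 (x + OQ.1 - c.1) (y + OQ.2 - c.2) (rot2 α p) := by
      apply Prod.ext <;>
        simp [tr2, rot2, hc, Prod.smul_def, Prod.sub_def, Prod.add_def] <;> ring
    rwa [heq] at hmid
  · apply Prod.ext <;> simp [tr2, hc] <;> ring
end

section
/- Let P, Q be finite sets in ℝ², both centrally symmetric about the origin, with the convex hull of each having nonempty interior. Suppose there is an orientation-preserving isometry σ of ℝ² with σ(P) contained in the interior of the convex hull of Q. Then there exists an angle α ∈ ℝ such that R_α(P) is contained in the interior of the convex hull of Q, where R_α is rotation by α about the origin. -/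
open Real

/-- For origin-symmetric polygons, containment up to an orientation-preserving
isometry can always be realized by a pure rotation about the origin. -/
theorem symmetric_fit_by_rotation (P Q : Set (ℝ × ℝ)) (hPfin : P.Finite) (hQfin : Q.Finite)
    (hPsym : ∀ p ∈ P, -p ∈ P) (hQsym : ∀ q ∈ Q, -q ∈ Q)
    (hPint : (interior (convexHull ℝ P)).Nonempty)
    (hQint : (interior (convexHull ℝ Q)).Nonempty)
    (hfit : ∃ x y α : ℝ, ∀ p ∈ P, tr2 x y (rot2 α p) ∈ interior (convexHull ℝ Q)) :
    ∃ α : ℝ, ∀ p ∈ P, rot2 α p ∈ interior (convexHull ℝ Q) := by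
  obtain ⟨x, y, α, h⟩ := hfit
  refine ⟨α, fun p hp => ?_⟩
  set C := interior (convexHull ℝ Q) with hC
  have hCconv : Convex ℝ C := (convex_convexHull ℝ Q).interior
  have hQneg : -Q = Q := by
    ext q
    simp only [Set.mem_neg]
    exact ⟨fun hq => by simpa using hQsym _ hq, fun hq => hQsym _ hq⟩
  have hCneg : ∀ z ∈ C, -z ∈ C := by
    intro z hz
    have h1 : Neg.neg '' interior (convexHull ℝ Q) = interior (Neg.neg '' (convexHull ℝ Q)) :=
      (Homeomorph.neg (ℝ × ℝ)).image_interior _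
    have h2 : Neg.neg '' (convexHull ℝ Q) = convexHull ℝ Q := by
      rw [Set.image_neg_eq_neg, ← convexHull_neg, hQneg]
    have : -z ∈ Neg.neg '' interior (convexHull ℝ Q) := ⟨z, hz, rfl⟩
    rw [h1, h2] at this
    exact this
  have ha : tr2 x y (rot2 α p) ∈ C := h p hp
  have hb : tr2 x y (rot2 α (-p)) ∈ C := h (-p) (hPsym p hp)
  have hnb : -(tr2 x y (rot2 α (-p))) ∈ C := hCneg _ hb
  have key : rot2 α p =
      (1/2 : ℝ) • tr2 x y (rot2 α p) + (1/2 : ℝ) • (-(tr2 x y (rot2 α (-p)))) := by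
    simp only [rot2, tr2, Prod.ext_iff, Prod.smul_mk, Prod.mk_add_mk, Prod.fst_neg,
      Prod.snd_neg, Prod.neg_mk, smul_eq_mul]
    constructor <;> ring
  rw [key]
  exact hCconv ha hnb (by norm_num) (by norm_num) (by norm_num)
end

section
/- Let P be a finite set in ℝ³ and suppose v = (x,y,α,θ₁,θ₂,φ₁,φ₂) ∈ ℝ⁷ satisfies (T_{x,y} ∘ R_α ∘ M_{θ₁,φ₁})(P) ⊆ interior(convexHull(M_{θ₂,φ₂}(P))). Then there exists ε > 0 such that every v' ∈ ℝ⁷ with ‖v' − v‖ < ε also satisfies the corresponding inclusion; i.e., the set of solutions to Rupert's problem is open in ℝ⁷. -/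
open Real

/-- The projection `M_{θ,φ} : ℝ³ → ℝ²` onto the plane orthogonal to the
direction `X(θ,φ)`, given by the matrix with rows `(−sin θ, cos θ, 0)` and
`(−cos θ cos φ, −sin θ cos φ, sin φ)`. -/
noncomputable def Mproj (θ φ : ℝ) (v : EuclideanSpace ℝ (Fin 3)) : EuclideanSpace ℝ (Fin 2) :=
  !₂[-Real.sin θ * v 0 + Real.cos θ * v 1,
    -(Real.cos θ * Real.cos φ) * v 0 - Real.sin θ * Real.cos φ * v 1 + Real.sin φ * v 2]

/-- Rotation of the plane by angle `α` about the origin. -/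
noncomputable def Rrot (α : ℝ) (p : EuclideanSpace ℝ (Fin 2)) : EuclideanSpace ℝ (Fin 2) :=
  !₂[Real.cos α * p 0 - Real.sin α * p 1, Real.sin α * p 0 + Real.cos α * p 1]

/-- Translation of the plane by the vector `(x, y)`. -/
noncomputable def Ttrans (x y : ℝ) (p : EuclideanSpace ℝ (Fin 2)) : EuclideanSpace ℝ (Fin 2) :=
  !₂[p 0 + x, p 1 + y]

/-- A parameter vector `v = (x, y, α, θ₁, θ₂, φ₁, φ₂) ∈ ℝ⁷` is a solution to
Rupert's problem for the finite set `P ⊂ ℝ³`. -/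
noncomputable def IsRupertSolution (P : Set (EuclideanSpace ℝ (Fin 3)))
    (v : EuclideanSpace ℝ (Fin 7)) : Prop :=
  ∀ p ∈ P, Ttrans (v 0) (v 1) (Rrot (v 2) (Mproj (v 3) (v 5) p)) ∈
    interior (convexHull ℝ (Mproj (v 4) (v 6) '' P))

/-!
Each constraint of `IsRupertSolution` asks that a point depending continuously on `v` lie in the
interior of the convex hull of finitely many points depending continuously on `v`, and such a
condition is open. If `ball q δ` lies in the hull of the `s i` and every `s i` moves by at most
`η`, the old hull lies in the new hull thickened by `η`. The thickening cancels: a point `z` of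
`ball q (δ - η)` outside the new (closed, convex) hull is separated from it by a functional `f`,
and pushing `z` by slightly more than `η` in a direction where `f` grows at nearly the rate `‖f‖`
stays inside `ball q δ` but exceeds every value of `f` on the thickened hull.
-/

open Metric Set Pointwise

section ConvexHull

variable {E : Type*} [NormedAddCommGroup E] [NormedSpace ℝ E]

lemma ContinuousLinearMap.exists_norm_lt_one_lt_apply (f : StrongDual ℝ E) {r : ℝ}
    (hr : r < ‖f‖) : ∃ x : E, ‖x‖ < 1 ∧ r < f x := by
  obtain ⟨x, hx, hrx⟩ := f.exists_lt_apply_of_lt_opNorm hr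
  rcases le_or_gt 0 (f x) with hfx | hfx
  · exact ⟨x, hx, by rwa [Real.norm_of_nonneg hfx] at hrx⟩
  · exact ⟨-x, by rwa [norm_neg], by simpa [Real.norm_of_nonpos hfx.le] using hrx⟩

lemma Convex.ball_subset_of_ball_subset_add_closedBall {A : Set E} (hA : Convex ℝ A)
    (hAc : IsClosed A) {q : E} {δ η : ℝ} (hη : 0 ≤ η)
    (h : ball q δ ⊆ A + closedBall 0 η) : ball q (δ - η) ⊆ A := by
  intro z hz
  by_contra hzA
  obtain ⟨f, u, hfA, hfz⟩ := geometric_hahn_banach_closed_point hA hAc hzA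
  rw [mem_ball] at hz
  set s := δ - dist z q
  have hs : η < s := by linarith
  have hf : 0 < ‖f‖ := by
    obtain ⟨a, haA, -⟩ := h (mem_ball_self (by linarith [dist_nonneg (x := z) (y := q)]))
    refine norm_pos_iff.2 fun hf0 => ?_
    have := (hfA a haA).trans hfz
    simp [hf0] at this
  obtain ⟨v, hv, hfv⟩ := f.exists_norm_lt_one_lt_apply
    (show ‖f‖ * (η / s) < ‖f‖ from mul_lt_of_lt_one_right hf ((div_lt_one (by linarith)).2 hs))
  have hw : z + s • v ∈ ball q δ := by
    rw [mem_ball]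
    calc dist (z + s • v) q ≤ ‖s • v‖ + dist z q := by
          rw [dist_eq_norm, dist_eq_norm, add_sub_right_comm, add_comm]; exact norm_add_le _ _
      _ < s + dist z q := by
          rw [norm_smul, Real.norm_of_nonneg (by linarith)]
          gcongr
          exact mul_lt_of_lt_one_right (by linarith) hv
      _ = δ := by ring
  obtain ⟨a, haA, b, hb, hab⟩ := h hw
  have hfb : f b ≤ ‖f‖ * η :=
    (le_abs_self _).trans (f.le_of_opNorm_le_of_le le_rfl (mem_closedBall_zero_iff.1 hb))
  have hsv : ‖f‖ * η ≤ s * f v := by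
    rw [mul_div_assoc', div_lt_iff₀ (by linarith)] at hfv; linarith
  have := congrArg f hab
  rw [map_add, map_add, map_smul, smul_eq_mul] at this
  linarith [hfA a haA]

lemma convexHull_range_subset_add_closedBall {ι : Type*} {f g : ι → E} {η : ℝ}
    (hfg : ∀ i, dist (f i) (g i) ≤ η) :
    convexHull ℝ (range f) ⊆ convexHull ℝ (range g) + closedBall 0 η := by
  refine convexHull_min ?_ ((convex_convexHull ℝ _).add (convex_closedBall 0 η))
  rintro - ⟨i, rfl⟩
  exact ⟨g i, subset_convexHull ℝ _ (mem_range_self i), f i - g i,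
    mem_closedBall_zero_iff.2 (dist_eq_norm (f i) (g i) ▸ hfg i), add_sub_cancel _ _⟩

lemma isOpen_setOf_mem_interior_convexHull_range (ι : Type*) [Fintype ι] :
    IsOpen {x : E × (ι → E) | x.1 ∈ interior (convexHull ℝ (range x.2))} := by
  refine Metric.isOpen_iff.2 fun ⟨q, f⟩ hq => ?_
  obtain ⟨δ, hδ, hball⟩ := Metric.mem_nhds_iff.1 (mem_interior_iff_mem_nhds.1 hq)
  refine ⟨δ / 3, by positivity, fun ⟨q', g⟩ hq'g => ?_⟩
  rw [mem_ball, Prod.dist_eq, max_lt_iff] at hq'g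
  obtain ⟨hq', hg⟩ := hq'g
  have hfg : ∀ i, dist (f i) (g i) ≤ δ / 3 := fun i =>
    (dist_comm (f i) (g i) ▸ dist_le_pi_dist g f i).trans hg.le
  have hcancel : ball q (δ - δ / 3) ⊆ convexHull ℝ (range g) :=
    (convex_convexHull ℝ _).ball_subset_of_ball_subset_add_closedBall
      ((finite_range g).isClosed_convexHull ℝ) (by positivity)
      (hball.trans (convexHull_range_subset_add_closedBall hfg))
  have hsub : ball q' (δ / 3) ⊆ convexHull ℝ (range g) := fun z hz => hcancel <| by
    rw [mem_ball] at hz ⊢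
    linarith [dist_triangle z q' q]
  exact interior_maximal hsub isOpen_ball (mem_ball_self (by positivity))

end ConvexHull

lemma isOpen_setOf_isRupertSolution {P : Set (EuclideanSpace ℝ (Fin 3))} (hP : P.Finite) :
    IsOpen {v | IsRupertSolution P v} := by
  have : Fintype P := hP.fintype
  have hsol : {v | IsRupertSolution P v} = ⋂ p ∈ P,
      (fun v : EuclideanSpace ℝ (Fin 7) => (Ttrans (v 0) (v 1) (Rrot (v 2) (Mproj (v 3) (v 5) p)),
        fun i : P => Mproj (v 4) (v 6) i)) ⁻¹'
      {x | x.1 ∈ interior (convexHull ℝ (range x.2))} := by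
    ext v
    simp [IsRupertSolution, ← image_eq_range]
  rw [hsol]
  exact hP.isOpen_biInter fun p _ =>
    (isOpen_setOf_mem_interior_convexHull_range P).preimage
      (by unfold Ttrans Rrot Mproj; fun_prop)

/-- The set of solutions to Rupert's problem is open in `ℝ⁷`: around any
solution there is an `ε`-ball of solutions. -/
theorem rupert_solutions_open (P : Set (EuclideanSpace ℝ (Fin 3))) (hfin : P.Finite)
    (v : EuclideanSpace ℝ (Fin 7)) (hv : IsRupertSolution P v) :
    ∃ ε > 0, ∀ v' : EuclideanSpace ℝ (Fin 7), ‖v' - v‖ < ε → IsRupertSolution P v' := by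
  obtain ⟨ε, hε, hball⟩ := Metric.isOpen_iff.1 (isOpen_setOf_isRupertSolution hfin) v hv
  exact ⟨ε, hε, fun v' hv' => hball (by rwa [mem_ball, dist_eq_norm])⟩
end
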